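/- arXiv:1212.6631 — 2 statements merged into one kernel-verified Lean document; each statement's English description precedes it below -/
import Mathlib

section
/- In the setting of the preceding statement (E, F maximally monotone, L bounded linear, M(x,v) = (−z + E x) × (r + F⁻¹ v), S(x,v) = (L*v, −Lx)), the primal set P is nonempty if and only if zer(M + S) is nonempty, which holds if and only if the dual set D is nonempty. -/
open scoped RealInnerProductSpace

section

/-- A set-valued operator is monotone. -/
def MonoOp {X : Type*} [NormedAddCommGroup X] [InnerProductSpace ℝ X]
    (A : X → Set X) : Prop :=
  ∀ x y u v, u ∈ A x → v ∈ A y → 0 ≤ ⟪x - y, u - v⟫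

/-- A set-valued operator is maximally monotone. -/
def MaxMonoOp {X : Type*} [NormedAddCommGroup X] [InnerProductSpace ℝ X]
    (A : X → Set X) : Prop :=
  MonoOp A ∧ ∀ B : X → Set X, MonoOp B → (∀ x, A x ⊆ B x) → ∀ x, A x = B x

/-- With `M(x,v) = (−z + Ex) × (r + F⁻¹v)` and `S(x,v) = (L*v, −Lx)`:
the primal set `P` is nonempty iff `zer(M+S)` is nonempty, which holds iff
the dual set `D` is nonempty. -/
theorem stmt7 {H G : Type*}
    [NormedAddCommGroup H] [InnerProductSpace ℝ H] [CompleteSpace H]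
    [NormedAddCommGroup G] [InnerProductSpace ℝ G] [CompleteSpace G]
    (E : H → Set H) (F : G → Set G)
    (hE : MaxMonoOp E) (hF : MaxMonoOp F)
    (L : H →L[ℝ] G) (z : H) (r : G) :
    ((∃ x : H, ∃ e ∈ E x, ∃ w ∈ F (L x - r), e + L.adjoint w = z) ↔
      (∃ p : H × G, ∃ a ∈ E p.1, ∃ b : G, p.2 ∈ F b ∧
        (-z + a, r + b) + (L.adjoint p.2, -L p.1) = ((0 : H), (0 : G)))) ∧
    ((∃ p : H × G, ∃ a ∈ E p.1, ∃ b : G, p.2 ∈ F b ∧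
        (-z + a, r + b) + (L.adjoint p.2, -L p.1) = ((0 : H), (0 : G))) ↔
      (∃ v : G, ∃ a : H, z - L.adjoint v ∈ E a ∧ ∃ b : G, v ∈ F b ∧ -r = -(L a) + b)) := by
  have key : ∀ (p : H × G) (a : H) (b : G),
      ((-z + a, r + b) + (L.adjoint p.2, -L p.1) = ((0 : H), (0 : G))) ↔
      (-z + a + L.adjoint p.2 = 0 ∧ r + b + -L p.1 = 0) := by
    intro p a b
    rw [Prod.mk_add_mk, Prod.mk.injEq]
  constructor
  · constructor
    · rintro ⟨x, e, he, w, hw, hz⟩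
      refine ⟨(x, w), e, he, L x - r, hw, (key _ _ _).2 ⟨?_, ?_⟩⟩
      · rw [← hz]; abel
      · abel
    · rintro ⟨⟨x, v⟩, a, ha, b, hb, heq⟩
      obtain ⟨h1, h2⟩ := (key _ _ _).1 heq
      have hb' : b = L x - r := by
        have h : b - (L x - r) = 0 := by rw [← h2]; abel
        exact sub_eq_zero.1 h
      refine ⟨x, a, ha, v, hb' ▸ hb, ?_⟩
      have h : a + L.adjoint v - z = 0 := by rw [← h1]; abel
      exact sub_eq_zero.1 h
  · constructor
    · rintro ⟨⟨x, v⟩, a, ha, b, hb, heq⟩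
      obtain ⟨h1, h2⟩ := (key _ _ _).1 heq
      refine ⟨v, x, ?_, b, hb, ?_⟩
      · have h : a + L.adjoint v - z = 0 := by rw [← h1]; abel
        have h' : z - L.adjoint v = a := (eq_sub_of_add_eq (sub_eq_zero.1 h)).symm
        rwa [h']
      · have h : b - (L x - r) = 0 := by rw [← h2]; abel
        rw [sub_eq_zero.1 h]; abel
    · rintro ⟨v, a, ha, b, hb, hr⟩
      refine ⟨(a, v), z - L.adjoint v, ha, b, hb, (key _ _ _).2 ⟨?_, ?_⟩⟩
      · abel
      · have h : r + b + -L a = (-(L a) + b) - (-r) := by abel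
        rw [h, ← hr, sub_self]

end
end

section
/- Let G be a real Hilbert space and let g, ℓ ∈ Γ₀(G) with dom ℓ* = G. Then ∂g □ ∂ℓ = ∂(g □ ℓ), where g □ ℓ is the infimal convolution (g □ ℓ)(x) = inf_y (g(y) + ℓ(x−y)), and g □ ℓ ∈ Γ₀(G). -/
open scoped RealInnerProductSpace

noncomputable section

variable {G : Type*} [NormedAddCommGroup G] [InnerProductSpace ℝ G]

/-- Properness of an extended-real-valued function. -/
def EProper (f : G → EReal) : Prop := (∀ x, f x ≠ ⊥) ∧ ∃ x, f x ≠ ⊤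

/-- Convexity of an extended-real-valued function. -/
def EConvexOn (f : G → EReal) : Prop :=
  ∀ x y : G, ∀ a b : ℝ, 0 ≤ a → 0 ≤ b → a + b = 1 →
    f (a • x + b • y) ≤ (a : EReal) * f x + (b : EReal) * f y

/-- Fenchel conjugate. -/
def EConj (f : G → EReal) (u : G) : EReal := ⨆ x : G, (⟪x, u⟫ : EReal) - f x

/-- Convex subdifferential. -/
def ESubdiff (f : G → EReal) (x : G) : Set G :=
  {u | ∀ y, f x + ((⟪y - x, u⟫ : ℝ) : EReal) ≤ f y}

/-- Infimal convolution. -/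
def EInfConv (g l : G → EReal) (x : G) : EReal := ⨅ y : G, g y + l (x - y)

/-- Inverse of a set-valued operator. -/
def opInv (A : G → Set G) (u : G) : Set G := {x | u ∈ A x}

/-- Parallel sum `A □ B = (A⁻¹ + B⁻¹)⁻¹` of two set-valued operators. -/
def parSum (A B : G → Set G) (y : G) : Set G :=
  {p | ∃ a ∈ opInv A p, ∃ b ∈ opInv B p, a + b = y}

/-! The inclusion `∂g □ ∂ℓ ⊆ ∂(g □ ℓ)` is a direct computation. Everything else rests on the
fact that `g □ ℓ` is exact and lower semicontinuous, which comes from a compactness argument: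
if `x n → x₀` and `g (y n) + ℓ (x n - y n) ≤ r n → r₀`, the `y n` are bounded, because `g` has a
continuous affine minorant while `dom ℓ* = G` says that `ℓ` dominates every continuous linear
functional up to a constant, so every functional is bounded above along `y`, and the uniform
boundedness principle applies. Along an ultrafilter finer than `atTop` (which replaces the
extraction of subsequences) the `y n` then converge weakly by Banach–Alaoglu, and since closed
convex epigraphs are separated from outside points by Hahn–Banach, `g` and `ℓ` are weakly lower
semicontinuous; this produces `z` with `g z + ℓ (x₀ - z) ≤ r₀`. An exact decomposition
`x = z + (x - z)` finally splits every `u ∈ ∂(g □ ℓ) x` into `u ∈ ∂g z ∩ ∂ℓ (x - z)`. -/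

open Filter Topology Set

section Convexity

variable {f : G → EReal}

theorem EConvexOn.le_combo (hf : EConvexOn f) {x₁ x₂ : G} {a b s₁ s₂ : ℝ}
    (ha : 0 ≤ a) (hb : 0 ≤ b) (hab : a + b = 1) (h₁ : f x₁ ≤ s₁) (h₂ : f x₂ ≤ s₂) :
    f (a • x₁ + b • x₂) ≤ ((a * s₁ + b * s₂ : ℝ) : EReal) :=
  calc f (a • x₁ + b • x₂) ≤ (a : EReal) * f x₁ + (b : EReal) * f x₂ := hf x₁ x₂ a b ha hb hab
    _ ≤ (a : EReal) * s₁ + (b : EReal) * s₂ := by gcongr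
    _ = ((a * s₁ + b * s₂ : ℝ) : EReal) := by norm_cast

theorem eConvexOn_of_forall_lt (hf : ∀ x, f x ≠ ⊥)
    (h : ∀ (x₁ x₂ : G) (a b : ℝ), 0 < a → 0 < b → a + b = 1 → ∀ r₁ r₂ : ℝ,
      f x₁ < r₁ → f x₂ < r₂ → f (a • x₁ + b • x₂) ≤ ((a * r₁ + b * r₂ : ℝ) : EReal)) :
    EConvexOn f := by
  intro x₁ x₂ a b ha hb hab
  rcases ha.eq_or_lt with rfl | ha
  · simp [show b = 1 by linarith]
  rcases hb.eq_or_lt with rfl | hb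
  · simp [show a = 1 by linarith]
  rcases eq_or_ne (f x₁) ⊤ with h₁ | h₁
  · simp [h₁, EReal.coe_mul_top_of_pos ha, EReal.top_add_of_ne_bot, EReal.mul_eq_bot, hb.not_gt,
      hf x₂]
  rcases eq_or_ne (f x₂) ⊤ with h₂ | h₂
  · simp [h₂, EReal.coe_mul_top_of_pos hb, EReal.add_top_of_ne_bot, EReal.mul_eq_bot, ha.not_gt,
      hf x₁]
  obtain ⟨μ₁, hμ₁⟩ : ∃ μ : ℝ, f x₁ = μ := ⟨_, (EReal.coe_toReal h₁ (hf x₁)).symm⟩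
  obtain ⟨μ₂, hμ₂⟩ : ∃ μ : ℝ, f x₂ = μ := ⟨_, (EReal.coe_toReal h₂ (hf x₂)).symm⟩
  rw [hμ₁, hμ₂, ← EReal.le_of_forall_lt_iff_le]
  intro z hz
  norm_cast at hz
  obtain ⟨δ, hδ, rfl⟩ : ∃ δ > 0, z = a * μ₁ + b * μ₂ + δ := ⟨z - _, sub_pos.2 hz, by ring⟩
  have hcombo : a * (μ₁ + δ) + b * (μ₂ + δ) = a * μ₁ + b * μ₂ + δ := by
    linear_combination δ * hab
  rw [← hcombo]
  apply h x₁ x₂ a b ha hb hab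
  · rw [hμ₁]; exact_mod_cast lt_add_of_pos_right μ₁ hδ
  · rw [hμ₂]; exact_mod_cast lt_add_of_pos_right μ₂ hδ

end Convexity

def EEpigraph {X : Type*} (f : X → EReal) : Set (X × ℝ) := {p | f p.1 ≤ p.2}

theorem isClosed_eEpigraph {X : Type*} [TopologicalSpace X] {f : X → EReal}
    (hf : LowerSemicontinuous f) : IsClosed (EEpigraph f) :=
  hf.isClosed_epigraph.preimage (continuous_id.prodMap continuous_coe_real_ereal)

section Epigraph

variable {f : G → EReal}

theorem convex_eEpigraph (hf : EConvexOn f) : Convex ℝ (EEpigraph f) :=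
  fun _ h₁ _ h₂ _ _ ha hb hab => hf.le_combo ha hb hab h₁ h₂

theorem exists_dual_separating_eEpigraph (hf : LowerSemicontinuous f) (hc : EConvexOn f)
    {x : G} {t : ℝ} (hxt : ¬ f x ≤ t) :
    ∃ (L : StrongDual ℝ G) (α u : ℝ),
      L x + t * α < u ∧ ∀ (w : G) (s : ℝ), f w ≤ s → u < L w + s * α := by
  obtain ⟨φ, u, hx, hepi⟩ := geometric_hahn_banach_point_closed (convex_eEpigraph hc)
    (isClosed_eEpigraph hf) (show (x, t) ∉ EEpigraph f from hxt)
  have hφ : ∀ (w : G) (s : ℝ), φ (w, s) = φ.comp (.inl ℝ G ℝ) w + s * φ (0, 1) := by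
    intro w s
    rw [show ((w, s) : G × ℝ) = (w, 0) + s • (0, 1) by simp, map_add, map_smul, smul_eq_mul]
    rfl
  refine ⟨φ.comp (.inl ℝ G ℝ), φ (0, 1), u, by rwa [← hφ], fun w s hws => ?_⟩
  rw [← hφ]
  exact hepi (w, s) hws

theorem le_of_weakly_tendsto {ι : Type*} {F : Filter ι} [F.NeBot] (hf : LowerSemicontinuous f)
    (hc : EConvexOn f) {y : ι → G} {z : G}
    (hy : ∀ L : StrongDual ℝ G, Tendsto (fun i => L (y i)) F (𝓝 (L z)))
    {s : ι → ℝ} {s₀ : ℝ} (hs : Tendsto s F (𝓝 s₀)) (hys : ∀ i, f (y i) ≤ s i) :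
    f z ≤ s₀ := by
  by_contra h
  obtain ⟨L, α, u, hz, hepi⟩ := exists_dual_separating_eEpigraph hf hc h
  have hlim : Tendsto (fun i => L (y i) + s i * α) F (𝓝 (L z + s₀ * α)) :=
    (hy L).add (hs.mul_const α)
  exact hz.not_ge (ge_of_tendsto hlim (.of_forall fun i => (hepi _ _ (hys i)).le))

theorem EProper.exists_dual_add_le (hp : EProper f) (hf : LowerSemicontinuous f)
    (hc : EConvexOn f) :
    ∃ (L : StrongDual ℝ G) (c : ℝ), ∀ w, ((L w + c : ℝ) : EReal) ≤ f w := by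
  obtain ⟨x, hx⟩ := hp.2
  obtain ⟨t, ht⟩ : ∃ t : ℝ, f x = t := ⟨_, (EReal.coe_toReal hx (hp.1 x)).symm⟩
  obtain ⟨L, α, u, hlt, hepi⟩ := exists_dual_separating_eEpigraph hf hc (x := x) (t := t - 1)
    (by rw [ht, not_le, EReal.coe_lt_coe_iff]; linarith)
  have hα : 0 < α := by linarith [hepi x t ht.le]
  refine ⟨-α⁻¹ • L, u / α, fun w => ?_⟩
  rcases eq_or_ne (f w) ⊤ with hw | hw
  · simp [hw]
  rw [← EReal.coe_toReal hw (hp.1 w), EReal.coe_le_coe_iff]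
  have := hepi w _ (EReal.le_coe_toReal hw)
  simp only [FunLike.coe_smul, Pi.smul_apply, smul_eq_mul]
  field_simp
  linarith

end Epigraph

theorem exists_dual_sub_le_of_eConj_ne_top [CompleteSpace G] {f : G → EReal}
    (hf : ∀ u, EConj f u ≠ ⊤) (L : StrongDual ℝ G) :
    ∃ d : ℝ, ∀ w, ((L w - d : ℝ) : EReal) ≤ f w := by
  set u := (InnerProductSpace.toDual ℝ G).symm L
  refine ⟨(EConj f u).toReal, fun w => ?_⟩
  have hw : (⟪w, u⟫ : EReal) - f w ≤ (EConj f u).toReal :=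
    (le_iSup (fun x => (⟪x, u⟫ : EReal) - f x) w).trans (EReal.le_coe_toReal (hf u))
  rw [EReal.sub_le_iff_le_add (.inr (EReal.coe_ne_top _)) (.inr (EReal.coe_ne_bot _)),
    real_inner_comm, InnerProductSpace.toDual_symm_apply] at hw
  rw [EReal.coe_sub]
  exact EReal.sub_le_of_le_add' hw

theorem exists_norm_le_of_bddAbove_dual {E ι : Type*} [NormedAddCommGroup E] [NormedSpace ℝ E]
    {y : ι → E} (hy : ∀ L : StrongDual ℝ E, BddAbove (range fun i => L (y i))) :
    ∃ C, ∀ i, ‖y i‖ ≤ C := by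
  have hpt : ∀ L : StrongDual ℝ E,
      ∃ C, ∀ i, ‖NormedSpace.inclusionInDoubleDual ℝ E (y i) L‖ ≤ C := by
    intro L
    obtain ⟨C₁, h₁⟩ := hy L
    obtain ⟨C₂, h₂⟩ := hy (-L)
    refine ⟨max C₁ C₂, fun i => abs_le.2 ⟨?_, ?_⟩⟩
    · have : -L (y i) ≤ C₂ := h₂ (mem_range_self i)
      simp only [NormedSpace.dual_def]
      linarith [le_max_right C₁ C₂]
    · exact (h₁ (mem_range_self i)).trans (le_max_left _ _)
  obtain ⟨C, hC⟩ := banach_steinhaus hpt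
  exact ⟨C, fun i =>
    ((NormedSpace.inclusionInDoubleDualLi ℝ).norm_map (y i)).symm.trans_le (hC i)⟩

theorem exists_weakly_tendsto_of_norm_le [CompleteSpace G] {ι : Type*} (F : Ultrafilter ι)
    {y : ι → G} {C : ℝ} (hy : ∀ i, ‖y i‖ ≤ C) :
    ∃ z : G, ∀ L : StrongDual ℝ G, Tendsto (fun i => L (y i)) F (𝓝 (L z)) := by
  let ψ (i : ι) : WeakDual ℝ G := StrongDual.toWeakDual (InnerProductSpace.toDual ℝ G (y i))
  have hball : ∀ᶠ i in (F : Filter ι), ψ i ∈ WeakDual.toStrongDual ⁻¹' Metric.closedBall 0 C :=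
    .of_forall fun i => by simpa [ψ] using hy i
  obtain ⟨ψ₀, -, hψ₀⟩ := (WeakDual.isCompact_closedBall (0 : StrongDual ℝ G) C).ultrafilter_le_nhds
    (F.map ψ) (le_principal_iff.2 hball)
  refine ⟨(InnerProductSpace.toDual ℝ G).symm (WeakDual.toStrongDual ψ₀), fun L => ?_⟩
  set v := (InnerProductSpace.toDual ℝ G).symm L
  have hlim := ((WeakDual.eval_continuous v).tendsto ψ₀).comp hψ₀
  -- By Riesz, `L = ⟪v, ·⟫`, so `L (y i) = ψ i v` and `L z = ψ₀ v`.
  convert hlim using 2 with i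
  · simp only [Function.comp, ψ, StrongDual.toWeakDual_apply,
      InnerProductSpace.toDual_apply_apply]
    rw [real_inner_comm, InnerProductSpace.toDual_symm_apply]
  · rw [← InnerProductSpace.toDual_symm_apply, real_inner_comm,
      ← InnerProductSpace.toDual_apply_apply, LinearIsometryEquiv.apply_symm_apply]
    rfl

theorem exists_tendsto_of_isBounded {ι X : Type*} [PseudoMetricSpace X] [ProperSpace X]
    (F : Ultrafilter ι) {s : ι → X} (hs : Bornology.IsBounded (range s)) :
    ∃ a, Tendsto s F (𝓝 a) := by
  obtain ⟨a, -, ha⟩ := hs.isCompact_closure.ultrafilter_le_nhds (F.map s)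
    (le_principal_iff.2 (mem_map.2 (univ_mem' fun i => subset_closure (mem_range_self i))))
  exact ⟨a, ha⟩

section InfConvGroup

variable {E : Type*} [NormedAddCommGroup E] {g ℓ : E → EReal}

theorem eInfConv_comm : EInfConv g ℓ = EInfConv ℓ g := by
  funext x
  exact (Equiv.subLeft x).iInf_congr fun y => by simp [add_comm]

theorem eInfConv_add_le (y z : E) : EInfConv g ℓ (y + z) ≤ g y + ℓ z :=
  (iInf_le (fun w => g w + ℓ (y + z - w)) y).trans_eq (by rw [add_sub_cancel_left])

theorem exists_le_of_eInfConv_lt (hg : ∀ x, g x ≠ ⊥) (hℓ : ∀ x, ℓ x ≠ ⊥) {x : E} {r : ℝ}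
    (h : EInfConv g ℓ x < r) :
    ∃ (y : E) (s : ℝ), g y ≤ s ∧ ℓ (x - y) ≤ ((r - s : ℝ) : EReal) := by
  obtain ⟨y, hy⟩ := iInf_lt_iff.1 h
  have hgy : g y ≠ ⊤ := fun h => by simp [h, EReal.top_add_of_ne_bot (hℓ _)] at hy
  refine ⟨y, (g y).toReal, EReal.le_coe_toReal hgy, ?_⟩
  rw [← EReal.coe_toReal hgy (hg y), add_comm] at hy
  rw [EReal.coe_sub,
    EReal.le_sub_iff_add_le (.inl (EReal.coe_ne_bot _)) (.inl (EReal.coe_ne_top _))]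
  exact hy.le

end InfConvGroup

section InfConv

variable {g ℓ : G → EReal}

theorem eConvexOn_eInfConv (hgc : EConvexOn g) (hℓc : EConvexOn ℓ) (hg : ∀ x, g x ≠ ⊥)
    (hℓ : ∀ x, ℓ x ≠ ⊥) (hf : ∀ x, EInfConv g ℓ x ≠ ⊥) : EConvexOn (EInfConv g ℓ) := by
  refine eConvexOn_of_forall_lt hf fun x₁ x₂ a b ha hb hab r₁ r₂ h₁ h₂ => ?_
  obtain ⟨y₁, s₁, hg₁, hℓ₁⟩ := exists_le_of_eInfConv_lt hg hℓ h₁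
  obtain ⟨y₂, s₂, hg₂, hℓ₂⟩ := exists_le_of_eInfConv_lt hg hℓ h₂
  have hsplit : a • x₁ + b • x₂ = (a • y₁ + b • y₂) + (a • (x₁ - y₁) + b • (x₂ - y₂)) := by
    simp only [smul_sub]; abel
  calc EInfConv g ℓ (a • x₁ + b • x₂)
      ≤ g (a • y₁ + b • y₂) + ℓ (a • (x₁ - y₁) + b • (x₂ - y₂)) := hsplit ▸ eInfConv_add_le _ _
    _ ≤ ((a * s₁ + b * s₂ : ℝ) : EReal) + ((a * (r₁ - s₁) + b * (r₂ - s₂) : ℝ) : EReal) :=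
      add_le_add (hgc.le_combo ha.le hb.le hab hg₁ hg₂) (hℓc.le_combo ha.le hb.le hab hℓ₁ hℓ₂)
    _ = ((a * r₁ + b * r₂ : ℝ) : EReal) := by rw [← EReal.coe_add]; ring_nf

theorem parSum_subset_eSubdiff_eInfConv (x : G) :
    parSum (ESubdiff g) (ESubdiff ℓ) x ⊆ ESubdiff (EInfConv g ℓ) x := by
  rintro u ⟨p, hp, q, hq, rfl⟩ w
  refine le_iInf fun c => ?_
  have hinner : ⟪w - (p + q), u⟫ = ⟪c - p, u⟫ + ⟪w - c - q, u⟫ := by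
    rw [← inner_add_left]; congr 1; abel
  calc EInfConv g ℓ (p + q) + ((⟪w - (p + q), u⟫ : ℝ) : EReal)
      ≤ (g p + ℓ q) + (((⟪c - p, u⟫ : ℝ) : EReal) + ((⟪w - c - q, u⟫ : ℝ) : EReal)) := by
        rw [hinner, EReal.coe_add]; gcongr; exact eInfConv_add_le p q
    _ = (g p + ((⟪c - p, u⟫ : ℝ) : EReal)) + (ℓ q + ((⟪w - c - q, u⟫ : ℝ) : EReal)) :=
        add_add_add_comm _ _ _ _
    _ ≤ g c + ℓ (w - c) := add_le_add (hp c) (hq (w - c))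

theorem mem_eSubdiff_of_add_eq_eInfConv {x z u : G} (hu : u ∈ ESubdiff (EInfConv g ℓ) x)
    (hz : g z + ℓ (x - z) = EInfConv g ℓ x) (hℓ_top : ℓ (x - z) ≠ ⊤) (hℓ_bot : ℓ (x - z) ≠ ⊥) :
    u ∈ ESubdiff g z := by
  intro w
  have h := (hu (w + (x - z))).trans (eInfConv_add_le w (x - z))
  rw [← hz, show w + (x - z) - x = w - z by abel, add_right_comm,
    ← EReal.coe_toReal hℓ_top hℓ_bot] at h
  exact (EReal.addLECancellable_coe _).add_le_add_iff_right.1 h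

end InfConv

section Complete

variable [CompleteSpace G] {g ℓ : G → EReal}

theorem bddAbove_range_dual_apply {L₀ : StrongDual ℝ G} {c₀ : ℝ}
    (hg : ∀ w, ((L₀ w + c₀ : ℝ) : EReal) ≤ g w) (hdom : ∀ u, EConj ℓ u ≠ ⊤)
    {x y : ℕ → G} {x₀ : G} {r s : ℕ → ℝ} {r₀ : ℝ}
    (hx : Tendsto x atTop (𝓝 x₀)) (hr : Tendsto r atTop (𝓝 r₀))
    (hgs : ∀ n, g (y n) ≤ s n) (hℓs : ∀ n, ℓ (x n - y n) ≤ ((r n - s n : ℝ) : EReal))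
    (L : StrongDual ℝ G) : BddAbove (range fun n => L (y n)) := by
  obtain ⟨d, hd⟩ := exists_dual_sub_le_of_eConj_ne_top hdom (L₀ - L)
  have hbound : ∀ n, L (y n) ≤ r n - c₀ + d - (L₀ - L) (x n) := by
    intro n
    have h₁ := EReal.coe_le_coe_iff.1 ((hg _).trans (hgs n))
    have h₂ := EReal.coe_le_coe_iff.1 ((hd _).trans (hℓs n))
    simp only [map_sub, sub_apply] at h₂ ⊢
    linarith
  obtain ⟨C, hC⟩ :=
    (((hr.sub_const c₀).add_const d).sub (((L₀ - L).continuous.tendsto x₀).comp hx)).bddAbove_range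
  exact ⟨C, forall_mem_range.2 fun n => (hbound n).trans (hC (mem_range_self n))⟩

theorem exists_add_le_of_tendsto_of_le (hgp : EProper g) (hgl : LowerSemicontinuous g)
    (hgc : EConvexOn g) (hℓl : LowerSemicontinuous ℓ) (hℓc : EConvexOn ℓ)
    (hdom : ∀ u, EConj ℓ u ≠ ⊤) {x y : ℕ → G} {x₀ : G} {r s : ℕ → ℝ} {r₀ : ℝ}
    (hx : Tendsto x atTop (𝓝 x₀)) (hr : Tendsto r atTop (𝓝 r₀))
    (hgs : ∀ n, g (y n) ≤ s n) (hℓs : ∀ n, ℓ (x n - y n) ≤ ((r n - s n : ℝ) : EReal)) :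
    ∃ z, g z + ℓ (x₀ - z) ≤ r₀ := by
  obtain ⟨L₀, c₀, hL₀⟩ := hgp.exists_dual_add_le hgl hgc
  have hy := bddAbove_range_dual_apply hL₀ hdom hx hr hgs hℓs
  obtain ⟨C, hC⟩ := exists_norm_le_of_bddAbove_dual hy
  have hs : Bornology.IsBounded (range s) := by
    rw [isBounded_iff_bddBelow_bddAbove]
    obtain ⟨B, hB⟩ := hy (-L₀)
    obtain ⟨d, hd⟩ := exists_dual_sub_le_of_eConj_ne_top hdom 0
    obtain ⟨R, hR⟩ := hr.bddAbove_range
    refine ⟨⟨c₀ - B, forall_mem_range.2 fun n => ?_⟩, ⟨R + d, forall_mem_range.2 fun n => ?_⟩⟩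
    · have h₁ := EReal.coe_le_coe_iff.1 ((hL₀ _).trans (hgs n))
      have h₂ : -L₀ (y n) ≤ B := hB (mem_range_self n)
      linarith
    · have h₁ := EReal.coe_le_coe_iff.1 ((hd _).trans (hℓs n))
      have h₂ := hR (mem_range_self n)
      simp only [zero_apply, zero_sub] at h₁
      linarith
  let F := Ultrafilter.of (atTop : Filter ℕ)
  have hF : (F : Filter ℕ) ≤ atTop := Ultrafilter.of_le _
  obtain ⟨z, hz⟩ := exists_weakly_tendsto_of_norm_le F hC
  obtain ⟨s₀, hs₀⟩ := exists_tendsto_of_isBounded F hs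
  have hxy (L : StrongDual ℝ G) : Tendsto (fun n => L (x n - y n)) F (𝓝 (L (x₀ - z))) := by
    simpa using ((L.continuous.tendsto x₀).comp (hx.mono_left hF)).sub (hz L)
  have hgz : g z ≤ s₀ := le_of_weakly_tendsto hgl hgc hz hs₀ hgs
  have hℓz : ℓ (x₀ - z) ≤ ((r₀ - s₀ : ℝ) : EReal) :=
    le_of_weakly_tendsto hℓl hℓc hxy ((hr.mono_left hF).sub hs₀) hℓs
  refine ⟨z, (add_le_add hgz hℓz).trans_eq ?_⟩
  rw [← EReal.coe_add, add_sub_cancel]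

theorem exists_add_le_of_tendsto (hgp : EProper g) (hgl : LowerSemicontinuous g)
    (hgc : EConvexOn g) (hℓl : LowerSemicontinuous ℓ) (hℓc : EConvexOn ℓ)
    (hdom : ∀ u, EConj ℓ u ≠ ⊤) {x : ℕ → G} {x₀ : G} {r : ℕ → ℝ} {r₀ : ℝ}
    (hx : Tendsto x atTop (𝓝 x₀)) (hr : Tendsto r atTop (𝓝 r₀))
    (h : ∀ n, EInfConv g ℓ (x n) < r n) : ∃ z, g z + ℓ (x₀ - z) ≤ r₀ := by
  have hℓ : ∀ w, ℓ w ≠ ⊥ := fun w =>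
    let ⟨_, hd⟩ := exists_dual_sub_le_of_eConj_ne_top hdom 0
    ne_bot_of_le_ne_bot (EReal.coe_ne_bot _) (hd w)
  choose y s hgs hℓs using fun n => exists_le_of_eInfConv_lt hgp.1 hℓ (h n)
  exact exists_add_le_of_tendsto_of_le hgp hgl hgc hℓl hℓc hdom hx hr hgs hℓs

theorem eInfConv_ne_bot (hgp : EProper g) (hgl : LowerSemicontinuous g) (hgc : EConvexOn g)
    (hdom : ∀ u, EConj ℓ u ≠ ⊤) (x : G) : EInfConv g ℓ x ≠ ⊥ := by
  obtain ⟨L, c, hL⟩ := hgp.exists_dual_add_le hgl hgc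
  obtain ⟨d, hd⟩ := exists_dual_sub_le_of_eConj_ne_top hdom L
  refine ne_bot_of_le_ne_bot (EReal.coe_ne_bot (L x + c - d)) (le_iInf fun y => ?_)
  calc ((L x + c - d : ℝ) : EReal)
      = ((L y + c : ℝ) : EReal) + ((L (x - y) - d : ℝ) : EReal) := by
        rw [← EReal.coe_add, map_sub]; ring_nf
    _ ≤ g y + ℓ (x - y) := add_le_add (hL y) (hd (x - y))

theorem eProper_eInfConv (hgp : EProper g) (hgl : LowerSemicontinuous g) (hgc : EConvexOn g)
    (hℓp : EProper ℓ) (hdom : ∀ u, EConj ℓ u ≠ ⊤) : EProper (EInfConv g ℓ) := by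
  obtain ⟨y, hy⟩ := hgp.2
  obtain ⟨z, hz⟩ := hℓp.2
  exact ⟨eInfConv_ne_bot hgp hgl hgc hdom,
    y + z, ne_top_of_le_ne_top (EReal.add_lt_top hy hz).ne (eInfConv_add_le y z)⟩

theorem lowerSemicontinuous_eInfConv (hgp : EProper g) (hgl : LowerSemicontinuous g)
    (hgc : EConvexOn g) (hℓl : LowerSemicontinuous ℓ) (hℓc : EConvexOn ℓ)
    (hdom : ∀ u, EConj ℓ u ≠ ⊤) : LowerSemicontinuous (EInfConv g ℓ) := by
  intro x b hb
  by_contra hne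
  obtain ⟨r, hbr, hrx⟩ := EReal.lt_iff_exists_real_btwn.1 hb
  obtain ⟨xs, hxs, hle⟩ := exists_seq_forall_of_frequently (not_eventually.1 hne)
  obtain ⟨z, hz⟩ := exists_add_le_of_tendsto hgp hgl hgc hℓl hℓc hdom hxs tendsto_const_nhds
    fun n => (not_lt.1 (hle n)).trans_lt hbr
  exact hrx.not_ge ((iInf_le _ z).trans hz)

theorem exists_add_eq_eInfConv (hgp : EProper g) (hgl : LowerSemicontinuous g)
    (hgc : EConvexOn g) (hℓl : LowerSemicontinuous ℓ) (hℓc : EConvexOn ℓ)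
    (hdom : ∀ u, EConj ℓ u ≠ ⊤) {x : G} (hx : EInfConv g ℓ x ≠ ⊤) :
    ∃ z, g z + ℓ (x - z) = EInfConv g ℓ x := by
  obtain ⟨μ, hμ⟩ : ∃ μ : ℝ, EInfConv g ℓ x = μ :=
    ⟨_, (EReal.coe_toReal hx (eInfConv_ne_bot hgp hgl hgc hdom x)).symm⟩
  have hr : Tendsto (fun n : ℕ => μ + 1 / (n + 1)) atTop (𝓝 μ) := by
    simpa using tendsto_one_div_add_atTop_nhds_zero_nat.const_add μ
  obtain ⟨z, hz⟩ := exists_add_le_of_tendsto hgp hgl hgc hℓl hℓc hdom tendsto_const_nhds hr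
    fun n => by rw [hμ]; exact_mod_cast lt_add_of_pos_right μ Nat.one_div_pos_of_nat
  exact ⟨z, le_antisymm (hz.trans hμ.ge) (iInf_le _ z)⟩

theorem eSubdiff_eInfConv_subset_parSum (hgp : EProper g) (hgl : LowerSemicontinuous g)
    (hgc : EConvexOn g) (hℓp : EProper ℓ) (hℓl : LowerSemicontinuous ℓ) (hℓc : EConvexOn ℓ)
    (hdom : ∀ u, EConj ℓ u ≠ ⊤) (x : G) :
    ESubdiff (EInfConv g ℓ) x ⊆ parSum (ESubdiff g) (ESubdiff ℓ) x := by
  intro u hu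
  have hx : EInfConv g ℓ x ≠ ⊤ := by
    obtain ⟨w, hw⟩ := (eProper_eInfConv hgp hgl hgc hℓp hdom).2
    intro htop
    exact hw (top_le_iff.1 (by simpa [htop] using hu w))
  obtain ⟨z, hz⟩ := exists_add_eq_eInfConv hgp hgl hgc hℓl hℓc hdom hx
  have hgz : g z ≠ ⊤ := fun h => hx (by rw [← hz, h, EReal.top_add_of_ne_bot (hℓp.1 _)])
  have hℓz : ℓ (x - z) ≠ ⊤ := fun h => hx (by rw [← hz, h, EReal.add_top_of_ne_bot (hgp.1 _)])
  have hz' : ℓ (x - z) + g (x - (x - z)) = EInfConv ℓ g x := by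
    rw [sub_sub_cancel, add_comm, hz, eInfConv_comm]
  refine ⟨z, mem_eSubdiff_of_add_eq_eInfConv hu hz hℓz (hℓp.1 _), x - z, ?_, add_sub_cancel z x⟩
  rw [eInfConv_comm] at hu
  exact mem_eSubdiff_of_add_eq_eInfConv hu hz' (by rwa [sub_sub_cancel])
    (by rw [sub_sub_cancel]; exact hgp.1 z)

end Complete

/-- If `g, ℓ ∈ Γ₀(G)` and `dom ℓ* = G`, then `∂g □ ∂ℓ = ∂(g □ ℓ)` and
`g □ ℓ ∈ Γ₀(G)`. -/
theorem stmt11 [CompleteSpace G]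
    (g ℓ : G → EReal)
    (hg : EProper g ∧ LowerSemicontinuous g ∧ EConvexOn g)
    (hℓ : EProper ℓ ∧ LowerSemicontinuous ℓ ∧ EConvexOn ℓ)
    (hdom : ∀ u, EConj ℓ u ≠ ⊤) :
    (∀ x, parSum (ESubdiff g) (ESubdiff ℓ) x = ESubdiff (EInfConv g ℓ) x) ∧
    EProper (EInfConv g ℓ) ∧ LowerSemicontinuous (EInfConv g ℓ) ∧
    EConvexOn (EInfConv g ℓ) := by
  obtain ⟨hgp, hgl, hgc⟩ := hg
  obtain ⟨hℓp, hℓl, hℓc⟩ := hℓ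
  exact ⟨fun x => (parSum_subset_eSubdiff_eInfConv x).antisymm
      (eSubdiff_eInfConv_subset_parSum hgp hgl hgc hℓp hℓl hℓc hdom x),
    eProper_eInfConv hgp hgl hgc hℓp hdom,
    lowerSemicontinuous_eInfConv hgp hgl hgc hℓl hℓc hdom,
    eConvexOn_eInfConv hgc hℓc hgp.1 hℓp.1 (eInfConv_ne_bot hgp hgl hgc hdom)⟩

end
end
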